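/- (Lemma 8) Fix costs c_i and qualities q_i, let B ≥ 1 and ρ ∈ [0,1]. Let (O, p^OPT) be an optimal solution to the joint sequencing and pricing problem, i.e., O is a duplicate-free list with |O| ≤ B and f(O, p^OPT) ≥ f(L, p) for every duplicate-free list L with |L| ≤ B and every price vector p; assume p^OPT_i ≥ c_i for all i and f(O, p^OPT) > 0. Then there exists a nonempty duplicate-free list R with |R| ≤ B such that every position t of R has reachability Θ_t = Π_{j<t} θ_{r_j} ≥ ρ and the set ℛ underlying R satisfies g(ℛ, p^OPT) ≥ (1 − ρ) f(O, p^OPT). -/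

import Mathlib

/-- MNL expected revenue of a finite set `S` of products, where product `i`
has revenue `α i` and preference weight `β i`. -/
noncomputable def g (α β : ℕ → ℝ) (S : Finset ℕ) : ℝ :=
  (∑ i ∈ S, α i * β i) / ((∑ i ∈ S, β i) + 1)

/-- Reachability of (0-based) position `t` of the sequence `S` under the
cascade browse model: the product of the continuation probabilities of all
earlier products. -/
noncomputable def reach (θ : ℕ → ℝ) (S : List ℕ) (t : ℕ) : ℝ :=
  ∏ j ∈ Finset.range t, θ (S.getD j 0)

/-- Expected revenue of a sequence of products `S` under the cascade browse
model combined with the MNL choice model. -/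
noncomputable def f (α β θ : ℕ → ℝ) (S : List ℕ) : ℝ :=
  (∑ t ∈ Finset.range (S.length - 1),
      reach θ S t * (1 - θ (S.getD t 0)) * g α β (S.take (t + 1)).toFinset)
    + reach θ S (S.length - 1) * g α β S.toFinset
/-- MNL expected revenue of a finite set `S` of products at prices `p`, where
product `i` has quality `q i` and cost `c i`. -/
noncomputable def gp (q c p : ℕ → ℝ) (S : Finset ℕ) : ℝ :=
  (∑ i ∈ S, (p i - c i) * Real.exp (q i - p i)) /
    ((∑ i ∈ S, Real.exp (q i - p i)) + 1)

/-- Expected revenue of a sequence of products `S` at prices `p` under the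
cascade browse model combined with the MNL choice model. -/
noncomputable def fp (q c θ p : ℕ → ℝ) (S : List ℕ) : ℝ :=
  (∑ t ∈ Finset.range (S.length - 1),
      reach θ S t * (1 - θ (S.getD t 0)) * gp q c p (S.take (t + 1)).toFinset)
    + reach θ S (S.length - 1) * gp q c p S.toFinset

/-
Write `Θ_t` for the reachability of position `t`. By summation by parts, `f O` is an average of
`g` over the prefixes of `O`, prefix `t + 1` carrying weight `Θ_t - Θ_{t+1}`. Cut `O` at the
first position `T` with `Θ_T < ρ` (or at its end) and let `R` be the best prefix of length at
most `T`. The weights before the cut add up to `1 - Θ_T`. After the cut every prefix is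
`O.take T` followed by a prefix of `O.drop T`, so subadditivity of `g` on disjoint sets bounds
the rest by `Θ_T (g (O.take T) + f (O.drop T)) ≤ Θ_T (g R + f (O.drop T))`. Optimality of `O`
gives `f (O.drop T) ≤ f O`, hence `f O ≤ g R + ρ f O`.
-/

theorem fp_eq_f (q c θ p : ℕ → ℝ) (L : List ℕ) :
    fp q c θ p L = f (fun i => p i - c i) (fun i => Real.exp (q i - p i)) θ L := rfl

theorem gp_eq_g (q c p : ℕ → ℝ) (S : Finset ℕ) :
    gp q c p S = g (fun i => p i - c i) (fun i => Real.exp (q i - p i)) S := rfl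

theorem g_union_le {α β : ℕ → ℝ} (hα : ∀ i, 0 ≤ α i) (hβ : ∀ i, 0 ≤ β i) {A B : Finset ℕ}
    (h : Disjoint A B) : g α β (A ∪ B) ≤ g α β A + g α β B := by
  have hN : ∀ S : Finset ℕ, 0 ≤ ∑ i ∈ S, α i * β i :=
    fun S => Finset.sum_nonneg fun i _ => mul_nonneg (hα i) (hβ i)
  have hD : ∀ S : Finset ℕ, 0 ≤ ∑ i ∈ S, β i := fun S => Finset.sum_nonneg fun i _ => hβ i
  rw [g, g, g, Finset.sum_union h, Finset.sum_union h, add_div]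
  exact add_le_add
    (div_le_div_of_nonneg_left (hN A) (by linarith [hD A]) (by linarith [hD B]))
    (div_le_div_of_nonneg_left (hN B) (by linarith [hD B]) (by linarith [hD A]))

section reach

variable (θ : ℕ → ℝ) (L : List ℕ)

theorem reach_zero : reach θ L 0 = 1 := Finset.prod_range_zero _

theorem reach_succ (t : ℕ) : reach θ L (t + 1) = reach θ L t * θ (L.getD t 0) :=
  Finset.prod_range_succ _ t

variable {θ}

theorem reach_nonneg (hθ : ∀ i, 0 ≤ θ i) (t : ℕ) : 0 ≤ reach θ L t :=
  Finset.prod_nonneg fun _ _ => hθ _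

theorem reach_succ_le (hθ₀ : ∀ i, 0 ≤ θ i) (hθ₁ : ∀ i, θ i ≤ 1) (t : ℕ) :
    reach θ L (t + 1) ≤ reach θ L t := by
  rw [reach_succ]
  exact mul_le_of_le_one_right (reach_nonneg L hθ₀ t) (hθ₁ _)

variable (θ)

theorem reach_take {n t : ℕ} (ht : t ≤ n) : reach θ (L.take n) t = reach θ L t :=
  Finset.prod_congr rfl fun j hj => by
    rw [List.getD_eq_getElem?_getD, List.getD_eq_getElem?_getD, List.getElem?_take,
      if_pos ((Finset.mem_range.1 hj).trans_le ht)]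

theorem reach_add (T s : ℕ) : reach θ L (T + s) = reach θ L T * reach θ (L.drop T) s := by
  rw [reach, reach, reach, Finset.prod_range_add]
  congr 1
  exact Finset.prod_congr rfl fun j _ => by
    rw [List.getD_eq_getElem?_getD, List.getD_eq_getElem?_getD, List.getElem?_drop]

theorem exists_reach_cut (hL : L ≠ []) {ρ : ℝ} (hρ : ρ ≤ 1) :
    ∃ T, 1 ≤ T ∧ T ≤ L.length ∧ (∀ t < T, ρ ≤ reach θ L t) ∧
      (T = L.length ∨ reach θ L T < ρ) := by
  classical
  have hex : ∃ T, L.length ≤ T ∨ reach θ L T < ρ := ⟨L.length, .inl le_rfl⟩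
  have hTL : Nat.find hex ≤ L.length := Nat.find_min' hex (.inl le_rfl)
  refine ⟨Nat.find hex, ?_, hTL, fun t ht => ?_, ?_⟩
  · by_contra! h0
    have hspec := Nat.find_spec hex
    rw [Nat.lt_one_iff.1 h0, reach_zero] at hspec
    have := List.length_pos_iff.2 hL
    rcases hspec with h | h <;> linarith
  · exact le_of_not_gt fun h => Nat.find_min hex ht (.inr h)
  · exact (Nat.find_spec hex).imp (le_antisymm hTL) id

end reach

/-- `f` after summation by parts, with an arbitrary set function `G` in place of `g α β`:
prefix `t + 1` is weighted by the probability of stopping right after position `t`. -/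
noncomputable def cascadeRevenue (θ : ℕ → ℝ) (G : Finset ℕ → ℝ) (L : List ℕ) : ℝ :=
  (∑ t ∈ Finset.range L.length,
      (reach θ L t - reach θ L (t + 1)) * G (L.take (t + 1)).toFinset)
    + reach θ L L.length * G L.toFinset

theorem f_eq_cascadeRevenue (α β θ : ℕ → ℝ) (L : List ℕ) :
    f α β θ L = cascadeRevenue θ (g α β) L := by
  rcases L.eq_nil_or_concat' with rfl | ⟨L', a, rfl⟩
  · simp [f, cascadeRevenue, g]
  · simp only [f, cascadeRevenue, List.length_append, List.length_singleton,
      Nat.add_sub_cancel, Finset.sum_range_succ, reach_succ, mul_one_sub]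
    rw [List.take_of_length_le (by simp)]
    ring

theorem f_nil (α β θ : ℕ → ℝ) : f α β θ [] = 0 := by
  simp [f, g]

section cascadeRevenue

variable {θ : ℕ → ℝ}

theorem cascadeRevenue_mono (hθ₀ : ∀ i, 0 ≤ θ i) (hθ₁ : ∀ i, θ i ≤ 1)
    {G G' : Finset ℕ → ℝ} {L : List ℕ}
    (hG : ∀ n, G (L.take n).toFinset ≤ G' (L.take n).toFinset) :
    cascadeRevenue θ G L ≤ cascadeRevenue θ G' L := by
  refine add_le_add (Finset.sum_le_sum fun t _ => ?_) ?_
  · exact mul_le_mul_of_nonneg_left (hG _) (sub_nonneg.2 (reach_succ_le L hθ₀ hθ₁ t))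
  · exact mul_le_mul_of_nonneg_left (by simpa using hG L.length) (reach_nonneg L hθ₀ _)

variable (θ)

theorem cascadeRevenue_const_add (G : Finset ℕ → ℝ) (L : List ℕ) (c : ℝ) :
    cascadeRevenue θ (fun S => c + G S) L = c + cascadeRevenue θ G L := by
  simp only [cascadeRevenue, mul_add, Finset.sum_add_distrib, ← Finset.sum_mul,
    Finset.sum_range_sub', reach_zero]
  ring

theorem cascadeRevenue_eq_sum_add_reach_mul_drop (G : Finset ℕ → ℝ) (L : List ℕ) {T : ℕ}
    (hT : T ≤ L.length) :
    cascadeRevenue θ G L =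
      (∑ t ∈ Finset.range T, (reach θ L t - reach θ L (t + 1)) * G (L.take (t + 1)).toFinset)
        + reach θ L T * cascadeRevenue θ (fun S => G ((L.take T).toFinset ∪ S)) (L.drop T) := by
  have hlen : L.length = T + (L.drop T).length := by rw [List.length_drop]; omega
  have hset : L.toFinset = (L.take T).toFinset ∪ (L.drop T).toFinset := by
    rw [← List.toFinset_append, List.take_append_drop]
  rw [cascadeRevenue, cascadeRevenue, hlen, Finset.sum_range_add, reach_add, hset, mul_add,
    Finset.mul_sum, add_assoc]
  congr 2
  · refine Finset.sum_congr rfl fun s _ => ?_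
    rw [add_assoc, reach_add θ L T s, reach_add θ L T (s + 1), List.take_add,
      List.toFinset_append]
    ring
  · ring

variable {θ}

theorem cascadeRevenue_le_add_reach_mul_drop (hθ₀ : ∀ i, 0 ≤ θ i) (hθ₁ : ∀ i, θ i ≤ 1)
    {G : Finset ℕ → ℝ} (hG : ∀ A B, Disjoint A B → G (A ∪ B) ≤ G A + G B)
    {L : List ℕ} (hL : L.Nodup) {T : ℕ} (hT1 : 1 ≤ T) (hTL : T ≤ L.length) {C : ℝ}
    (hC : ∀ t ∈ Finset.Icc 1 T, G (L.take t).toFinset ≤ C) :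
    cascadeRevenue θ G L ≤ C + reach θ L T * cascadeRevenue θ G (L.drop T) := by
  set A := (L.take T).toFinset
  have head : ∑ t ∈ Finset.range T,
      (reach θ L t - reach θ L (t + 1)) * G (L.take (t + 1)).toFinset ≤ (1 - reach θ L T) * C :=
    calc _ ≤ ∑ t ∈ Finset.range T, (reach θ L t - reach θ L (t + 1)) * C :=
          Finset.sum_le_sum fun t ht => mul_le_mul_of_nonneg_left
            (hC _ (Finset.mem_Icc.2 ⟨by omega, Finset.mem_range.1 ht⟩))
            (sub_nonneg.2 (reach_succ_le L hθ₀ hθ₁ t))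
      _ = _ := by rw [← Finset.sum_mul, Finset.sum_range_sub', reach_zero]
  have tail : cascadeRevenue θ (fun S => G (A ∪ S)) (L.drop T) ≤
      G A + cascadeRevenue θ G (L.drop T) := by
    rw [← cascadeRevenue_const_add]
    refine cascadeRevenue_mono hθ₀ hθ₁ fun n => hG _ _ ?_
    exact List.disjoint_toFinset_iff_disjoint.2 <| List.disjoint_of_subset_right
      (List.take_sublist _ _).subset (List.disjoint_take_drop hL le_rfl)
  have hA : G A ≤ C := hC T (Finset.mem_Icc.2 ⟨hT1, le_rfl⟩)
  have hr := reach_nonneg L hθ₀ T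
  rw [cascadeRevenue_eq_sum_add_reach_mul_drop θ G L hTL]
  linarith [mul_le_mul_of_nonneg_left tail hr, mul_le_mul_of_nonneg_left hA hr]

end cascadeRevenue

theorem f_le_add_reach_mul_f_drop {θ : ℕ → ℝ} (hθ₀ : ∀ i, 0 ≤ θ i) (hθ₁ : ∀ i, θ i ≤ 1)
    {α β : ℕ → ℝ} (hα : ∀ i, 0 ≤ α i) (hβ : ∀ i, 0 ≤ β i)
    {L : List ℕ} (hL : L.Nodup) {T : ℕ} (hT1 : 1 ≤ T) (hTL : T ≤ L.length) {C : ℝ}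
    (hC : ∀ t ∈ Finset.Icc 1 T, g α β (L.take t).toFinset ≤ C) :
    f α β θ L ≤ C + reach θ L T * f α β θ (L.drop T) := by
  simpa only [f_eq_cascadeRevenue] using
    cascadeRevenue_le_add_reach_mul_drop hθ₀ hθ₁ (fun _ _ => g_union_le hα hβ) hL hT1 hTL hC

theorem stmt16_general (q c θ : ℕ → ℝ) (hθ : ∀ i, 0 ≤ θ i ∧ θ i ≤ 1)
    (B : ℕ) (ρ : ℝ) (hρ0 : 0 ≤ ρ) (hρ1 : ρ ≤ 1)
    (O : List ℕ) (pOPT : ℕ → ℝ) (hO : O.Nodup) (hOB : O.length ≤ B)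
    (hp : ∀ i, c i ≤ pOPT i)
    (hopt : ∀ (L : List ℕ) (p : ℕ → ℝ), L.Nodup → L.length ≤ B →
        fp q c θ p L ≤ fp q c θ pOPT O)
    (hfO : 0 < fp q c θ pOPT O) :
    ∃ R : List ℕ, R ≠ [] ∧ R.Nodup ∧ R.length ≤ B ∧
      (∀ t < R.length, ρ ≤ reach θ R t) ∧
      (1 - ρ) * fp q c θ pOPT O ≤ gp q c pOPT R.toFinset := by
  simp only [fp_eq_f, gp_eq_g] at hopt hfO ⊢
  set α : ℕ → ℝ := fun i => pOPT i - c i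
  set β : ℕ → ℝ := fun i => Real.exp (q i - pOPT i)
  have hα i : 0 ≤ α i := sub_nonneg.2 (hp i)
  have hβ i : 0 ≤ β i := (Real.exp_pos _).le
  have hO0 : O ≠ [] := by
    rintro rfl
    exact hfO.ne' (f_nil α β θ)
  obtain ⟨T, hT1, hTO, hreach, hcut⟩ := exists_reach_cut θ O hO0 hρ1
  obtain ⟨n, hn, hmax⟩ := (Finset.Icc 1 T).exists_max_image
    (fun t => g α β (O.take t).toFinset) ⟨1, Finset.mem_Icc.2 ⟨le_rfl, hT1⟩⟩
  obtain ⟨hn1, hnT⟩ := Finset.mem_Icc.1 hn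
  have hsplit := f_le_add_reach_mul_f_drop (fun i => (hθ i).1) (fun i => (hθ i).2) hα hβ hO
    hT1 hTO hmax
  have hdrop : reach θ O T * f α β θ (O.drop T) ≤ ρ * f α β θ O := by
    rcases hcut with rfl | hlt
    · rw [List.drop_length, f_nil, mul_zero]
      exact mul_nonneg hρ0 hfO.le
    · calc _ ≤ reach θ O T * f α β θ O :=
            mul_le_mul_of_nonneg_left (hopt _ _ (hO.sublist (List.drop_sublist _ _))
              (by rw [List.length_drop]; omega)) (reach_nonneg O (fun i => (hθ i).1) T)
        _ ≤ ρ * f α β θ O := mul_le_mul_of_nonneg_right hlt.le hfO.le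
  refine ⟨O.take n, ?_, hO.sublist (List.take_sublist _ _),
    by rw [List.length_take]; omega, fun t ht => ?_, by linarith⟩
  · exact List.ne_nil_of_length_pos (by rw [List.length_take]; omega)
  · rw [List.length_take] at ht
    rw [reach_take θ O (by omega)]
    exact hreach t (by omega)

/-- Lemma 8: pricing analogue of Lemma 2. -/
theorem stmt16 (q c θ : ℕ → ℝ) (hθ : ∀ i, 0 ≤ θ i ∧ θ i ≤ 1)
    (B : ℕ) (hB : 1 ≤ B) (ρ : ℝ) (hρ0 : 0 ≤ ρ) (hρ1 : ρ ≤ 1)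
    (O : List ℕ) (pOPT : ℕ → ℝ) (hO : O.Nodup) (hOB : O.length ≤ B)
    (hp : ∀ i, c i ≤ pOPT i)
    (hopt : ∀ (L : List ℕ) (p : ℕ → ℝ), L.Nodup → L.length ≤ B →
        fp q c θ p L ≤ fp q c θ pOPT O)
    (hfO : 0 < fp q c θ pOPT O) :
    ∃ R : List ℕ, R ≠ [] ∧ R.Nodup ∧ R.length ≤ B ∧
      (∀ t < R.length, ρ ≤ reach θ R t) ∧
      (1 - ρ) * fp q c θ pOPT O ≤ gp q c pOPT R.toFinset :=
  stmt16_general q c θ hθ B ρ hρ0 hρ1 O pOPT hO hOB hp hopt hfO
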